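/- arXiv:1411.1620 — 3 statements merged into one kernel-verified Lean document; each statement's English description precedes it below -/
import Mathlib

section
/- There exists a function f : 𝕋^∞ → ℝ that is 1-Lipschitz with respect to the Euclidean metric dist₂ such that for every parallel infinite-dimensional subtorus M ⊆ 𝕋^∞ and every real number R, there exists a point x ∈ M with f(x) > R. (In particular, no value a ∈ ℝ can satisfy the conclusion of the spectrum theorem for f, so the measurability hypothesis in the main theorem is essential.) -/
noncomputable section
open MeasureTheory ENNReal Filter
open scoped Classical

/-- The infinite-dimensional torus `𝕋^∞ = (ℝ/ℤ)^ℕ`. -/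
abbrev InfTorus : Type := ℕ → AddCircle (1 : ℝ)

/-- The metric `dist_p` on the infinite torus, valued in `[0,∞]`:
`dist_p(x,y) = (∑ᵢ dist(xᵢ,yᵢ)^p)^(1/p)`. -/
def distP (p : ℝ) (x y : InfTorus) : ℝ≥0∞ := (∑' i, edist (x i) (y i) ^ p) ^ (1 / p)

/-!
The classes of the relation `dist₂ < ∞` partition `𝕋^∞`, and the Lipschitz condition only
compares points of the same class. Hence `f x = dist₂(x, x^C)`, for a fixed representative
`x^C` of the class of `x`, is `1`-Lipschitz by the triangle inequality. A subtorus through `b`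
contains, for every `n`, the point obtained from `b` by moving `n` free coordinates by `1/2`;
it lies in the class of `b` at distance `√n / 2` from `b`, so `f ≥ √n / 2 - f b` there.
-/

theorem ENNReal.Lp_add_le_tsum {ι : Type*} (f g : ι → ℝ≥0∞) {p : ℝ} (hp : 1 ≤ p) :
    (∑' i, (f i + g i) ^ p) ^ (1 / p) ≤
      (∑' i, f i ^ p) ^ (1 / p) + (∑' i, g i ^ p) ^ (1 / p) := by
  have hp₀ : 0 < p := zero_lt_one.trans_le hp
  rw [one_div, ENNReal.rpow_inv_le_iff hp₀, ENNReal.tsum_eq_iSup_sum]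
  refine iSup_le fun s => ?_
  rw [← ENNReal.rpow_inv_le_iff hp₀, ← one_div]
  calc (∑ i ∈ s, (f i + g i) ^ p) ^ (1 / p)
      ≤ (∑ i ∈ s, f i ^ p) ^ (1 / p) + (∑ i ∈ s, g i ^ p) ^ (1 / p) := ENNReal.Lp_add_le _ _ _ hp
    _ ≤ (∑' i, f i ^ p) ^ (1 / p) + (∑' i, g i ^ p) ^ (1 / p) := by
      gcongr <;> exact ENNReal.sum_le_tsum s

theorem distP_self {p : ℝ} (hp : 0 < p) (x : InfTorus) : distP p x x = 0 := by
  simp [distP, hp]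

theorem distP_comm (p : ℝ) (x y : InfTorus) : distP p x y = distP p y x := by
  simp only [distP, edist_comm]

theorem distP_triangle {p : ℝ} (hp : 1 ≤ p) (x y z : InfTorus) :
    distP p x z ≤ distP p x y + distP p y z :=
  calc distP p x z ≤ (∑' i, (edist (x i) (y i) + edist (y i) (z i)) ^ p) ^ (1 / p) := by
        unfold distP
        gcongr with i
        exact edist_triangle _ _ _
    _ ≤ distP p x y + distP p y z := ENNReal.Lp_add_le_tsum _ _ hp

/-- `InfTorus` carries the sup metric of the product; this synonym carries `distP 2` instead. -/
def L2Torus : Type := InfTorus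

instance : PseudoEMetricSpace L2Torus where
  edist := distP 2
  edist_self := distP_self two_pos
  edist_comm := distP_comm 2
  edist_triangle := distP_triangle one_le_two

section FinEDistClass

variable {X : Type*} [PseudoEMetricSpace X]

/-- The representative `x^C` of the class `C` of `x` for the relation `edist x y < ⊤`. -/
def finEDistRep (x : X) : X := (Quotient.mk Metric.edistLtTopSetoid x).out

theorem edist_finEDistRep_lt_top (x : X) : edist x (finEDistRep x) < ⊤ :=
  Metric.edistLtTopSetoid.symm (Quotient.mk_out (s := Metric.edistLtTopSetoid) x)

theorem finEDistRep_eq {x y : X} (h : edist x y < ⊤) : finEDistRep x = finEDistRep y :=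
  congrArg Quotient.out (Quotient.sound (s := Metric.edistLtTopSetoid) h)

def distToFinEDistRep (x : X) : ℝ := (edist x (finEDistRep x)).toReal

theorem toReal_edist_le_distToFinEDistRep_add {x y : X} (h : edist x y < ⊤) :
    (edist x y).toReal ≤ distToFinEDistRep x + distToFinEDistRep y := by
  have hx := edist_finEDistRep_lt_top x
  have hy := edist_finEDistRep_lt_top y
  rw [distToFinEDistRep, distToFinEDistRep, ← finEDistRep_eq h] at *
  exact ENNReal.toReal_le_add (edist_triangle_right _ _ _) hx.ne hy.ne

theorem abs_distToFinEDistRep_sub_le {x y : X} (h : edist x y < ⊤) :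
    |distToFinEDistRep x - distToFinEDistRep y| ≤ (edist x y).toReal := by
  have hx := edist_finEDistRep_lt_top x
  have hy := edist_finEDistRep_lt_top y
  rw [← finEDistRep_eq h] at hy
  rw [distToFinEDistRep, distToFinEDistRep, ← finEDistRep_eq h, abs_sub_le_iff,
    sub_le_iff_le_add, sub_le_iff_le_add]
  exact ⟨ENNReal.toReal_le_add (edist_triangle _ _ _) h.ne hy.ne,
    ENNReal.toReal_le_add (edist_triangle_left _ _ _) h.ne hx.ne⟩

end FinEDistClass

theorem distP_two_piecewise_add (b : InfTorus) (s : Finset ℕ) (c : AddCircle (1 : ℝ)) :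
    distP 2 (s.piecewise (fun i => b i + c) b) b = ENNReal.ofReal (√s.card * ‖c‖) := by
  have hout : ∀ i ∉ s, edist (s.piecewise (fun i => b i + c) b i) (b i) ^ (2 : ℝ) = 0 :=
    fun i hi => by
      rw [s.piecewise_eq_of_notMem _ _ hi, edist_self, ENNReal.zero_rpow_of_pos two_pos]
  have hin : ∀ i ∈ s, edist (s.piecewise (fun i => b i + c) b i) (b i) ^ (2 : ℝ) =
      ENNReal.ofReal (‖c‖ ^ 2) := fun i hi => by
    rw [s.piecewise_eq_of_mem _ _ hi, edist_dist, dist_self_add_left,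
      ENNReal.ofReal_rpow_of_nonneg (norm_nonneg c) zero_le_two, Real.rpow_two]
  rw [distP, tsum_eq_sum hout, Finset.sum_congr rfl hin, Finset.sum_const, nsmul_eq_mul,
    ← ENNReal.ofReal_natCast, ← ENNReal.ofReal_mul (Nat.cast_nonneg _),
    ENNReal.ofReal_rpow_of_nonneg (by positivity) (by norm_num), ← Real.sqrt_eq_rpow,
    Real.sqrt_mul (Nat.cast_nonneg _), Real.sqrt_sq (norm_nonneg c)]

/-- There is a (non-measurable) function `f : 𝕋^∞ → ℝ` which is `1`-Lipschitz
w.r.t. the Euclidean metric `dist₂` (the condition being vacuous at infinite distance), yet is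
unbounded above on every parallel infinite-dimensional subtorus. Hence the measurability
hypothesis in the main theorem is essential. -/
theorem exists_lipschitz_unbounded_on_every_subtorus :
    ∃ f : InfTorus → ℝ,
      (∀ x y : InfTorus, distP 2 x y ≠ ∞ → |f x - f y| ≤ (distP 2 x y).toReal) ∧
      ∀ (A : Set ℕ), A.Infinite → ∀ (b : InfTorus) (R : ℝ),
        ∃ x : InfTorus, (∀ i ∉ A, x i = b i) ∧ R < f x := by
  refine ⟨distToFinEDistRep (X := L2Torus), fun x y h => abs_distToFinEDistRep_sub_le h.lt_top,
    fun A hA b R => ?_⟩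
  obtain ⟨n, hn⟩ := exists_nat_gt ((2 * (R + distToFinEDistRep (X := L2Torus) b)) ^ 2)
  obtain ⟨s, hsA, rfl⟩ := hA.exists_subset_card_eq n
  set x : InfTorus := s.piecewise (fun i => b i + ((1 / 2 : ℝ) : AddCircle (1 : ℝ))) b
  have hxb : distP 2 x b = ENNReal.ofReal (√s.card / 2) := by
    rw [distP_two_piecewise_add, AddCircle.norm_half_period_eq, abs_one, mul_one_div]
  refine ⟨x, fun i hi => s.piecewise_eq_of_notMem _ _ fun his => hi (hsA his), ?_⟩
  have hlow := toReal_edist_le_distToFinEDistRep_add (X := L2Torus) (x := x) (y := b)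
    (show distP 2 x b < ⊤ from hxb ▸ ENNReal.ofReal_lt_top)
  change (distP 2 x b).toReal ≤ _ at hlow
  rw [hxb, ENNReal.toReal_ofReal (by positivity)] at hlow
  linarith [Real.lt_sqrt_of_sq_lt hn]
end
end

section
/- Let B ⊆ ℝ be a Borel set such that both B and ℝ∖B intersect every non-empty open interval in a set of positive Lebesgue measure, and let A = { x ∈ 𝕋^∞ : ∑_{i=1}^∞ cos(2πxᵢ)/i² ∈ B }. Then the indicator function f = 1_A is measurable and has empty spectrum: for every a ∈ ℝ there exists ε > 0 such that no parallel infinite-dimensional subtorus M ⊆ 𝕋^∞ satisfies ess sup_M |f − a| < ε. -/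
noncomputable section
open MeasureTheory ENNReal Filter
open scoped Classical

/-- The product of the uniform probability measures on the circles `ℝ/ℤ`, realized as the
normalized Haar measure on the compact group `𝕋^∞` (by uniqueness of the translation-invariant
Borel probability measure, they coincide). -/
def torusMeasure : Measure InfTorus :=
  Measure.addHaarMeasure (⊤ : TopologicalSpace.PositiveCompacts InfTorus)

/-- The map fixing all coordinates outside `A` to the values of `b`. -/
def subtorusProj (A : Set ℕ) (b : InfTorus) (x : InfTorus) : InfTorus :=
  fun i => if i ∈ A then x i else b i

/-- The uniform probability measure on the parallel subtorus
`M = {x | ∀ i ∉ A, x i = b i}`: the pushforward of the product measure under the projection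
onto `M`, i.e. the product of uniform measures over the coordinates in `A`, the remaining
coordinates being fixed to the values of `b`. -/
def subtorusMeasure (A : Set ℕ) (b : InfTorus) : Measure InfTorus :=
  torusMeasure.map (subtorusProj A b)

/-- `cos(2πz)` for `z ∈ ℝ/ℤ`: the real part of the canonical character
`z ↦ exp(2πiz)` of `ℝ/ℤ`. -/
def cosC (z : AddCircle (1 : ℝ)) : ℝ := ((AddCircle.toCircle z : ℂ)).re

/-- The indicator function of `{x ∈ 𝕋^∞ : ∑_{i≥1} cos(2πxᵢ)/i² ∈ B}` (with Lean's `0`-indexed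
coordinate `i` corresponding to the paper's coordinate `i+1`). -/
def specFun (B : Set ℝ) : InfTorus → ℝ :=
  ({x : InfTorus | (∑' i : ℕ, cosC (x i) / ((i : ℝ) + 1) ^ 2) ∈ B}).indicator fun _ => 1

open Set

/-!
Put `S x = ∑ cos(2πxᵢ)/(i+1)²`. Moving `x` along a free coordinate `i` of a subtorus changes
`S x` by `α + β cos(2πt)` with `β = (i+1)⁻² > 0`, which sweeps the interval `(α - β, α + β)`;
since differentiable maps send null sets to null sets, `{t | S x ∈ C}` has positive measure on
that circle whenever `C` meets every interval in positive measure. Integrating over `x`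
(Tonelli and translation invariance), `{S ∈ B}` and `{S ∉ B}` both have positive measure on every
subtorus, so `1_A` equals `1` and `0` on sets of positive measure, and
`ess sup |1_A - a| ≥ max (|1 - a|, |a|) ≥ 1/2`.
-/

lemma cosC_coe (u : ℝ) : cosC u = Real.cos (2 * Real.pi * u) := by
  rw [cosC, AddCircle.toCircle_apply_mk, Circle.coe_exp, Complex.exp_ofReal_mul_I_re]
  norm_num

lemma abs_cosC_le (z : AddCircle (1 : ℝ)) : |cosC z| ≤ 1 :=
  (Complex.abs_re_le_norm _).trans (Circle.norm_coe _).le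

lemma continuous_cosC : Continuous cosC :=
  Complex.continuous_re.comp (continuous_subtype_val.comp AddCircle.continuous_toCircle)

def cosSeries (x : InfTorus) : ℝ := ∑' i : ℕ, cosC (x i) / ((i : ℝ) + 1) ^ 2

lemma specFun_eq_indicator (B : Set ℝ) : specFun B = (cosSeries ⁻¹' B).indicator 1 := rfl

lemma summable_one_div_succ_sq : Summable fun i : ℕ => 1 / ((i : ℝ) + 1) ^ 2 := by
  simpa using (summable_nat_add_iff 1).2 (Real.summable_one_div_nat_pow.2 one_lt_two)

lemma norm_cosC_div_succ_sq_le (z : AddCircle (1 : ℝ)) (i : ℕ) :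
    ‖cosC z / ((i : ℝ) + 1) ^ 2‖ ≤ 1 / ((i : ℝ) + 1) ^ 2 := by
  rw [Real.norm_eq_abs, abs_div, abs_of_pos (by positivity : (0 : ℝ) < ((i : ℝ) + 1) ^ 2)]
  gcongr
  exact abs_cosC_le z

lemma hasSum_cosSeries (x : InfTorus) :
    HasSum (fun i : ℕ => cosC (x i) / ((i : ℝ) + 1) ^ 2) (cosSeries x) :=
  (Summable.of_norm_bounded summable_one_div_succ_sq fun i =>
    norm_cosC_div_succ_sq_le (x i) i).hasSum

lemma continuous_cosSeries : Continuous cosSeries :=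
  continuous_tsum (fun i => (continuous_cosC.comp (continuous_apply i)).div_const _)
    summable_one_div_succ_sq fun i x => norm_cosC_div_succ_sq_le (x i) i

lemma cosSeries_update (x : InfTorus) (i : ℕ) (s : AddCircle (1 : ℝ)) :
    cosSeries (Function.update x i s) =
      cosSeries x - cosC (x i) / ((i : ℝ) + 1) ^ 2 + cosC s / ((i : ℝ) + 1) ^ 2 := by
  have h := (hasSum_cosSeries x).update i (cosC s / ((i : ℝ) + 1) ^ 2)
  rw [← funext (Function.apply_update
    (fun (j : ℕ) (z : AddCircle (1 : ℝ)) => cosC z / ((j : ℝ) + 1) ^ 2) x i s)] at h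
  rw [(hasSum_cosSeries _).unique h]
  ring

lemma continuous_subtorusProj (A : Set ℕ) (b : InfTorus) : Continuous (subtorusProj A b) :=
  continuous_pi fun i => by
    by_cases hi : i ∈ A
    · simpa [subtorusProj, hi] using continuous_apply i
    · simpa [subtorusProj, hi] using continuous_const

lemma subtorusProj_single_add {A : Set ℕ} (b : InfTorus) {i : ℕ} (hi : i ∈ A)
    (t : AddCircle (1 : ℝ)) (x : InfTorus) :
    subtorusProj A b (Pi.single i t + x) = Function.update (subtorusProj A b x) i (t + x i) := by
  ext j
  rcases eq_or_ne j i with rfl | hj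
  · simp [subtorusProj, hi]
  · simp [subtorusProj, hj]

section Lebesgue

variable {E : Type*} [NormedAddCommGroup E] [NormedSpace ℝ E] [FiniteDimensional ℝ E]
  [MeasurableSpace E] [BorelSpace E] (μ : Measure E) [μ.IsAddHaarMeasure]

lemma measure_inter_preimage_pos_of_differentiableOn {f : E → E} {s C : Set E}
    (hf : DifferentiableOn ℝ f s) (h : 0 < μ (f '' s ∩ C)) : 0 < μ (s ∩ f ⁻¹' C) := by
  refine pos_iff_ne_zero.2 fun h0 => h.ne' ?_
  rw [← image_inter_preimage]
  exact addHaar_image_eq_zero_of_differentiableOn_of_addHaar_eq_zero μ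
    (hf.mono inter_subset_left) h0

end Lebesgue

lemma Ioo_subset_image_add_mul_cos (α β : ℝ) :
    Ioo (α - β) (α + β) ⊆
      (fun u => α + β * Real.cos (2 * Real.pi * u)) '' Ioo 0 (1 / 2) := by
  have h := intermediate_value_Ioo' (one_half_pos (α := ℝ)).le
    (f := fun u => α + β * Real.cos (2 * Real.pi * u)) (by fun_prop)
  simpa only [mul_zero, Real.cos_zero, mul_one, show 2 * Real.pi * (1 / 2) = Real.pi by ring,
    Real.cos_pi, mul_neg, ← sub_eq_add_neg] using h

lemma volume_setOf_add_mul_cosC_mem_pos {C : Set ℝ}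
    (hC : ∀ u v : ℝ, u < v → 0 < volume (C ∩ Ioo u v)) (α : ℝ) {β : ℝ} (hβ : 0 < β) :
    0 < volume {t : AddCircle (1 : ℝ) | α + β * cosC t ∈ C} := by
  set φ : ℝ → ℝ := fun u => α + β * Real.cos (2 * Real.pi * u)
  have hφ : 0 < volume (Ioo 0 (1 / 2) ∩ φ ⁻¹' C) := by
    refine measure_inter_preimage_pos_of_differentiableOn volume (by fun_prop) ?_
    calc 0 < volume (C ∩ Ioo (α - β) (α + β)) := hC _ _ (by linarith)
      _ ≤ volume (φ '' Ioo 0 (1 / 2) ∩ C) := by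
        rw [inter_comm]
        exact measure_mono (inter_subset_inter_left _ (Ioo_subset_image_add_mul_cos α β))
  have hmk := AddCircle.measurePreserving_mk (1 : ℝ) 0
  calc 0 < volume (Ioo 0 (1 / 2) ∩ φ ⁻¹' C) := hφ
    _ ≤ volume.restrict (Ioc 0 (0 + 1)) (((↑) : ℝ → AddCircle (1 : ℝ)) ⁻¹'
          {t | α + β * cosC t ∈ C}) := by
      refine le_trans (measure_mono fun u hu => ?_) (Measure.le_restrict_apply _ _)
      refine ⟨?_, hu.1.1, by linarith [hu.1.2]⟩
      simpa [cosC_coe, φ] using hu.2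
    _ ≤ volume {t : AddCircle (1 : ℝ) | α + β * cosC t ∈ C} := by
      rw [← hmk.map_eq]
      exact Measure.le_map_apply hmk.measurable.aemeasurable _

theorem measure_pos_of_forall_measure_setOf_add_mem_pos {G K : Type*} [MeasurableSpace G]
    [AddGroup G] [MeasurableAdd₂ G] [MeasurableSpace K] (μ : Measure G) [SFinite μ]
    [μ.IsAddLeftInvariant] [NeZero μ] (ν : Measure K) [SFinite ν] {f : K → G}
    (hf : Measurable f) {S : Set G} (hS : MeasurableSet S)
    (h : ∀ x, 0 < ν {t | f t + x ∈ S}) : 0 < μ S := by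
  set F : G → K → ℝ≥0∞ := fun x t => S.indicator 1 (f t + x)
  have hF : Measurable (Function.uncurry F) :=
    (measurable_one.indicator hS).comp ((hf.comp measurable_snd).add measurable_fst)
  have hF_left : ∀ x, ∫⁻ t, F x t ∂ν = ν {t | f t + x ∈ S} := fun x =>
    lintegral_indicator_one ((hf.add_const x) hS)
  have hF_right : ∀ t, ∫⁻ x, F x t ∂μ = μ S := fun t =>
    (lintegral_indicator_one (measurable_const_add (f t) hS)).trans
      (measure_preimage_add μ (f t) S)
  have hmeas : Measurable fun x => ∫⁻ t, F x t ∂ν := hF.lintegral_prod_right'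
  have hpos : 0 < ∫⁻ x, ∫⁻ t, F x t ∂ν ∂μ := by
    rw [lintegral_pos_iff_support hmeas,
      Function.support_eq_univ fun x => (hF_left x ▸ h x).ne']
    exact pos_iff_ne_zero.2 (Measure.measure_univ_ne_zero.2 (NeZero.ne μ))
  -- Tonelli, and invariance of `μ` under the translations by `f t`.
  have hfubini : ∫⁻ x, ∫⁻ t, F x t ∂ν ∂μ = ν univ * μ S := by
    rw [lintegral_lintegral_swap hF.aemeasurable, lintegral_congr hF_right, lintegral_const,
      mul_comm]
  rw [hfubini] at hpos
  exact pos_of_ne_zero (right_ne_zero_of_mul hpos.ne')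

instance : torusMeasure.IsAddHaarMeasure := by
  unfold torusMeasure
  infer_instance

lemma torusMeasure_setOf_cosSeries_subtorusProj_mem_pos {C : Set ℝ} (hC : MeasurableSet C)
    (hpos : ∀ u v : ℝ, u < v → 0 < volume (C ∩ Ioo u v)) {A : Set ℕ} (hA : A.Nonempty)
    (b : InfTorus) : 0 < torusMeasure {x | cosSeries (subtorusProj A b x) ∈ C} := by
  obtain ⟨i, hi⟩ := hA
  refine measure_pos_of_forall_measure_setOf_add_mem_pos torusMeasure volume
    (continuous_single i).measurable
    ((continuous_cosSeries.comp (continuous_subtorusProj A b)).measurable hC) fun x => ?_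
  set α := cosSeries (subtorusProj A b x) - cosC (x i) / ((i : ℝ) + 1) ^ 2
  have hfiber : {t : AddCircle (1 : ℝ) | cosSeries (subtorusProj A b (Pi.single i t + x)) ∈ C} =
      (· + x i) ⁻¹' {s | α + (((i : ℝ) + 1) ^ 2)⁻¹ * cosC s ∈ C} := by
    ext t
    simp [subtorusProj_single_add b hi, cosSeries_update, subtorusProj, hi, α, div_eq_inv_mul]
  change 0 < volume {t | cosSeries (subtorusProj A b (Pi.single i t + x)) ∈ C}
  rw [hfiber, measure_preimage_add_right]
  exact volume_setOf_add_mul_cosC_mem_pos hpos α (by positivity)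

lemma subtorusMeasure_preimage_cosSeries_pos {C : Set ℝ} (hC : MeasurableSet C)
    (hpos : ∀ u v : ℝ, u < v → 0 < volume (C ∩ Ioo u v)) {A : Set ℕ} (hA : A.Nonempty)
    (b : InfTorus) : 0 < subtorusMeasure A b (cosSeries ⁻¹' C) := by
  rw [subtorusMeasure, Measure.map_apply (continuous_subtorusProj A b).measurable
    (continuous_cosSeries.measurable hC)]
  exact torusMeasure_setOf_cosSeries_subtorusProj_mem_pos hC hpos hA b

/-- Let `B ⊆ ℝ` be a Borel set such that both `B` and its complement meet
every nonempty open interval in positive Lebesgue measure. Then the indicator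
`f = 1_{{x : ∑ᵢ cos(2πxᵢ)/i² ∈ B}}` is measurable but has empty spectrum: for every `a ∈ ℝ`
there is `ε > 0` such that no parallel infinite-dimensional subtorus `M` satisfies
`ess sup_M |f - a| < ε`. -/
theorem indicator_has_empty_spectrum (B : Set ℝ) (hB : MeasurableSet B)
    (hB1 : ∀ u v : ℝ, u < v → 0 < volume (B ∩ Set.Ioo u v))
    (hB2 : ∀ u v : ℝ, u < v → 0 < volume (Bᶜ ∩ Set.Ioo u v)) :
    AEMeasurable (specFun B) torusMeasure ∧
    ∀ a : ℝ, ∃ ε : ℝ, 0 < ε ∧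
      ∀ (A₀ : Set ℕ) (b : InfTorus), A₀.Infinite →
        ¬ essSup (fun x => ENNReal.ofReal |specFun B x - a|) (subtorusMeasure A₀ b)
            < ENNReal.ofReal ε := by
  refine ⟨(measurable_one.indicator (continuous_cosSeries.measurable hB)).aemeasurable,
    fun a => ⟨1 / 2, one_half_pos, fun A₀ b hA hlt => ?_⟩⟩
  have hclose := ae_lt_of_essSup_lt hlt
  have exists_close : ∀ C : Set ℝ, MeasurableSet C → (∀ u v, u < v → 0 < volume (C ∩ Ioo u v)) →
      ∃ x ∈ cosSeries ⁻¹' C, |specFun B x - a| < 1 / 2 := fun C hC hpos =>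
    (((frequently_ae_mem_iff.2 (subtorusMeasure_preimage_cosSeries_pos hC hpos hA.nonempty
      b).ne').and_eventually hclose).exists).imp fun _ hx =>
        ⟨hx.1, (ENNReal.ofReal_lt_ofReal_iff one_half_pos).1 hx.2⟩
  obtain ⟨x₁, hx₁, h₁⟩ := exists_close B hB hB1
  obtain ⟨x₀, hx₀, h₀⟩ := exists_close Bᶜ hB.compl hB2
  rw [specFun_eq_indicator, indicator_of_mem hx₁] at h₁
  rw [specFun_eq_indicator, indicator_of_notMem (show x₀ ∉ cosSeries ⁻¹' B from hx₀)] at h₀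
  rw [abs_lt] at h₀ h₁
  norm_num at h₀ h₁
  linarith
end
end

section
/- For every x ∈ 𝕋^∞, the set {y ∈ 𝕋^∞ : dist₂(x, y) < ∞} — the dist₂-connectivity class of x in 𝕋^∞ — has σ-measure zero. Consequently 𝕋^∞ splits into infinitely many such classes, each of measure zero. -/
noncomputable section
open MeasureTheory ENNReal Filter
open scoped Classical

/-!
If `dist₂(x, y) < ∞` then `dist(xᵢ, yᵢ) ≤ 1/4` for all large `i`, so the class of `x` lies in a
countable union of tail cylinders `{y | ∀ i ≥ N, dist(xᵢ, yᵢ) ≤ r}` with `r < 1/2`. For every `k`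
such a cylinder sits inside a cylinder over `k` coordinates, of measure `(2r)^k`, so it is null.
The classes cover `𝕋^∞`, which has measure one, hence there are uncountably many of them.
-/

open Function

instance : Measure.IsAddHaarMeasure torusMeasure := by
  unfold torusMeasure; infer_instance

instance : IsProbabilityMeasure torusMeasure :=
  ⟨by rw [torusMeasure, ← TopologicalSpace.PositiveCompacts.coe_top (α := InfTorus)]
      exact Measure.addHaarMeasure_self⟩

instance : IsProbabilityMeasure (volume : Measure (AddCircle (1 : ℝ))) :=
  ⟨by simp [AddCircle.measure_univ]⟩

lemma measurePreserving_comp_right_torusMeasure {ι : Type*} [Fintype ι] {e : ι → ℕ}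
    (he : Injective e) :
    MeasurePreserving (fun y : InfTorus => y ∘ e) torusMeasure volume :=
  AddMonoidHom.measurePreserving
    (f := (LinearMap.funLeft ℤ (AddCircle (1 : ℝ)) e).toAddMonoidHom)
    (continuous_pi fun j => continuous_apply (e j))
    (LinearMap.funLeft_surjective_of_injective ℤ _ e he) (by simp)

lemma torusMeasure_setOf_forall_dist_le_le_pow {ι : Type*} [Fintype ι] {e : ι → ℕ}
    (he : Injective e) (x : InfTorus) (r : ℝ) :
    torusMeasure {y : InfTorus | ∀ j, dist (x (e j)) (y (e j)) ≤ r}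
      ≤ ENNReal.ofReal (2 * r) ^ Fintype.card ι := by
  have hpre : {y : InfTorus | ∀ j, dist (x (e j)) (y (e j)) ≤ r}
      = (fun y : InfTorus => y ∘ e) ⁻¹'
          Set.univ.pi fun j => Metric.closedBall (x (e j)) r := by
    ext y; simp [dist_comm]
  rw [hpre, (measurePreserving_comp_right_torusMeasure he).measure_preimage
    (MeasurableSet.univ_pi fun j => measurableSet_closedBall).nullMeasurableSet, volume_pi_pi]
  calc ∏ j, volume (Metric.closedBall (x (e j)) r)
      ≤ ∏ _j : ι, ENNReal.ofReal (2 * r) := by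
        gcongr with j
        rw [AddCircle.volume_closedBall]
        exact ENNReal.ofReal_le_ofReal (min_le_right _ _)
    _ = _ := by simp

lemma torusMeasure_setOf_forall_ge_dist_le_eq_zero (x : InfTorus) (N : ℕ) {r : ℝ} (hr : r < 1 / 2) :
    torusMeasure {y : InfTorus | ∀ i, N ≤ i → dist (x i) (y i) ≤ r} = 0 := by
  have hbound (k : ℕ) : torusMeasure {y : InfTorus | ∀ i, N ≤ i → dist (x i) (y i) ≤ r}
      ≤ ENNReal.ofReal (2 * r) ^ k := by
    have h := torusMeasure_setOf_forall_dist_le_le_pow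
      ((add_right_injective N).comp (Fin.val_injective (n := k))) x r
    rw [Fintype.card_fin] at h
    exact le_trans (measure_mono fun _ hy (j : Fin k) => hy (N + j) (Nat.le_add_right _ _)) h
  refine le_antisymm (ge_of_tendsto' (ENNReal.tendsto_pow_atTop_nhds_zero_of_lt_one ?_) hbound)
    zero_le
  rw [ENNReal.ofReal_lt_one]; linarith

lemma distP_self_ne_top {p : ℝ} (hp : 0 < p) (x : InfTorus) : distP p x x ≠ ∞ := by
  simp [distP, ENNReal.zero_rpow_of_pos hp, hp]

lemma eventually_dist_le_of_distP_ne_top {p : ℝ} (hp : 0 < p) {x y : InfTorus}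
    (h : distP p x y ≠ ∞) {r : ℝ} (hr : 0 < r) : ∀ᶠ i in atTop, dist (x i) (y i) ≤ r := by
  have hsum : ∑' i, edist (x i) (y i) ^ p ≠ ∞ := by
    contrapose! h
    rw [distP, h, ENNReal.top_rpow_of_pos (by positivity)]
  have hsmall : ∀ᶠ i in atTop, edist (x i) (y i) ^ p < ENNReal.ofReal r ^ p := by
    rw [← Nat.cofinite_eq_atTop]
    exact (ENNReal.tendsto_cofinite_zero_of_tsum_ne_top hsum).eventually_lt_const
      (ENNReal.rpow_pos (by simpa using hr) ENNReal.ofReal_ne_top)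
  filter_upwards [hsmall] with i hi
  exact (edist_le_ofReal hr.le).1 ((ENNReal.rpow_lt_rpow_iff hp).1 hi).le

lemma torusMeasure_setOf_distP_ne_top_eq_zero {p : ℝ} (hp : 0 < p) (x : InfTorus) :
    torusMeasure {y : InfTorus | distP p x y ≠ ∞} = 0 := by
  refine measure_mono_null (fun y hy => ?_) (measure_iUnion_null fun N =>
    torusMeasure_setOf_forall_ge_dist_le_eq_zero x N (r := 1 / 4) (by norm_num))
  obtain ⟨N, hN⟩ := eventually_atTop.1
    (eventually_dist_le_of_distP_ne_top hp hy (by norm_num : (0 : ℝ) < 1 / 4))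
  exact Set.mem_iUnion.2 ⟨N, hN⟩

lemma MeasureTheory.Measure.not_countable_of_sUnion_eq_univ {α : Type*} [MeasurableSpace α]
    {μ : Measure α} [NeZero μ] {S : Set (Set α)} (hnull : ∀ s ∈ S, μ s = 0)
    (hcover : ⋃₀ S = Set.univ) : ¬ S.Countable := fun hS =>
  NeZero.ne μ (Measure.measure_univ_eq_zero.1 (hcover ▸ (measure_sUnion_null_iff hS).2 hnull))

/-- Every `dist₂`-connectivity class `{y : dist₂(x,y) < ∞}` of `𝕋^∞` has
measure zero; consequently there are infinitely many such classes. -/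
theorem connectivity_classes_null_and_infinite :
    (∀ x : InfTorus, torusMeasure {y : InfTorus | distP 2 x y ≠ ∞} = 0) ∧
      {C : Set InfTorus | ∃ x : InfTorus, C = {y : InfTorus | distP 2 x y ≠ ∞}}.Infinite := by
  refine ⟨torusMeasure_setOf_distP_ne_top_eq_zero two_pos, fun hfin => ?_⟩
  refine Measure.not_countable_of_sUnion_eq_univ (μ := torusMeasure) ?_ ?_ hfin.countable
  · rintro _ ⟨x, rfl⟩
    exact torusMeasure_setOf_distP_ne_top_eq_zero two_pos x
  · exact Set.eq_univ_of_forall fun y => ⟨_, ⟨y, rfl⟩, distP_self_ne_top two_pos y⟩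
end
end
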